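/- arXiv:1408.2947 — 2 statements merged into one kernel-verified Lean document; each statement's English description precedes it below -/
import Mathlib

section
/- For every ε > 0 there exists n₀ ∈ ℕ such that for all n ≥ n₀ the following deterministic statement holds: any two points u, v with r_u > R_{i_0}, r_v > R_{i_0} and d(u,v) ≤ R satisfy |θ_u − θ_v| ≤ e^{−R/2} R^{C_0+ε}; in particular |θ_u − θ_v| = O((ln n)^{C_0+o(1)}/n). -/
open Real MeasureTheory Filter

noncomputable def coshDist (p q : ℝ × ℝ) : ℝ :=
  Real.cosh p.1 * Real.cosh q.1 - Real.sinh p.1 * Real.sinh q.1 * Real.cos (p.2 - q.2)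

lemma coshDist_symm (p q : ℝ × ℝ) : coshDist p q = coshDist q p := by
  unfold coshDist
  rw [mul_comm (Real.cosh p.1) (Real.cosh q.1), mul_comm (Real.sinh p.1) (Real.sinh q.1),
    ← Real.cos_neg, neg_sub]

noncomputable def RHG {V : Type} (Rr : ℝ) (x : V → ℝ × ℝ) : SimpleGraph V where
  Adj i j := i ≠ j ∧ coshDist (x i) (x j) ≤ Real.cosh Rr
  symm := by
    constructor
    intro i j h
    exact ⟨h.1.symm, by rw [coshDist_symm]; exact h.2⟩
  loopless := by
    constructor
    intro i h
    exact h.1 rfl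

noncomputable def dens (α Rr : ℝ) (p : ℝ × ℝ) : ℝ :=
  if 0 ≤ p.1 ∧ p.1 < Rr ∧ 0 ≤ p.2 ∧ p.2 < 2 * Real.pi then
    α * Real.sinh (α * p.1) / (2 * Real.pi * (Real.cosh (α * Rr) - 1))
  else 0

noncomputable def hypMeasure (α Rr : ℝ) : Measure (ℝ × ℝ) :=
  volume.withDensity (fun p => ENNReal.ofReal (dens α Rr p))

noncomputable def mes (α Rr : ℝ) (S : Set (ℝ × ℝ)) : ℝ := (hypMeasure α Rr S).toReal

noncomputable def sampleMeasure (α Rr : ℝ) (n : ℕ) : Measure (Fin n → ℝ × ℝ) :=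
  volume.withDensity (fun x => ∏ i, ENNReal.ofReal (dens α Rr (x i)))

noncomputable def Rn (C : ℝ) (n : ℕ) : ℝ := 2 * Real.log n + C

noncomputable def hBall (p : ℝ × ℝ) (ρ : ℝ) : Set (ℝ × ℝ) := {q | coshDist p q ≤ Real.cosh ρ}

noncomputable def origin : ℝ × ℝ := (0, 0)

noncomputable def C0 (α : ℝ) : ℝ := 2 / (1/2 - 3/4 * α + α ^ 2 / 4)

noncomputable def Ri (α Rr : ℝ) (i : ℕ) : ℝ :=
  if i = 0 then Rr / 2 else Rr * Real.exp (-(α ^ i) / 2)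

noncomputable def i0 (α C : ℝ) (n : ℕ) : ℕ :=
  sInf {i : ℕ | α ^ i ≤ 2 * C0 α * Real.log (Rn C n) / Rn C n}

noncomputable def angDist (a b : ℝ) : ℝ := min |a - b| (2 * Real.pi - |a - b|)

def validPoint (Rr : ℝ) (p : ℝ × ℝ) : Prop :=
  0 ≤ p.1 ∧ p.1 < Rr ∧ 0 ≤ p.2 ∧ p.2 < 2 * Real.pi

def extendPt {n : ℕ} (q : ℝ × ℝ) (x : Fin n → ℝ × ℝ) : Option (Fin n) → ℝ × ℝ :=
  fun v => v.elim q x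


/-! Writing `θ` for the angle between `u` and `v`, the hyperbolic law of cosines reads
`cosh d(u,v) = cosh (r_u - r_v) + sinh r_u sinh r_v (1 - cos θ)`, so `d(u,v) ≤ R` forces
`sinh r_u sinh r_v (1 - cos θ) ≤ e^R / 2`; with `1 - cos θ ≥ 2θ²/π²` this gives
`θ ≤ 2π e^{(R - r_u - r_v)/2}`. The choice of `i₀` gives `α^{i₀} R ≤ 2 C₀ ln R`, hence
`R_{i₀} ≥ R (1 - α^{i₀}/2) ≥ R - C₀ ln R` and `θ ≤ 2π e^{-R/2} R^{C₀}`; the factor `2π` is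
eventually absorbed by `R^ε`. -/

lemma cos_angDist (a b : ℝ) : cos (angDist a b) = cos (a - b) := by
  unfold angDist
  rcases min_cases |a - b| (2 * π - |a - b|) with ⟨h, _⟩ | ⟨h, _⟩
  · rw [h, cos_abs]
  · rw [h, cos_two_pi_sub, cos_abs]

lemma angDist_nonneg {a b : ℝ} (h : |a - b| ≤ 2 * π) : 0 ≤ angDist a b :=
  le_min (abs_nonneg _) (sub_nonneg.2 h)

lemma angDist_le_pi (a b : ℝ) : angDist a b ≤ π := by
  rcases le_total |a - b| π with h | h
  · exact (min_le_left _ _).trans h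
  · exact (min_le_right _ _).trans (by linarith)

lemma exp_div_four_le_sinh {r : ℝ} (hr : 1 ≤ r) : exp r / 4 ≤ sinh r := by
  have h2 : 2 ≤ exp r := by linarith [add_one_le_exp r]
  have h1 : exp (-r) ≤ 1 := exp_le_one_iff.2 (by linarith)
  rw [sinh_eq]
  linarith

lemma cosh_sub_one_le_exp_div_two {ρ : ℝ} (hρ : 0 ≤ ρ) : cosh ρ - 1 ≤ exp ρ / 2 := by
  have : exp (-ρ) ≤ 1 := exp_le_one_iff.2 (by linarith)
  rw [cosh_eq]
  linarith

lemma coshDist_eq_cosh_sub_add (p q : ℝ × ℝ) :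
    coshDist p q = cosh (p.1 - q.1) + sinh p.1 * sinh q.1 * (1 - cos (p.2 - q.2)) := by
  rw [coshDist, cosh_sub]
  ring

lemma sinh_mul_sinh_mul_one_sub_cos_le (p q : ℝ × ℝ) :
    sinh p.1 * sinh q.1 * (1 - cos (p.2 - q.2)) ≤ coshDist p q - 1 := by
  rw [coshDist_eq_cosh_sub_add]
  linarith [one_le_cosh (p.1 - q.1)]

lemma angDist_le_of_coshDist_le {p q : ℝ × ℝ} {ρ : ℝ} (hp : 1 ≤ p.1) (hq : 1 ≤ q.1)
    (hθ : 0 ≤ angDist p.2 q.2) (hρ : 0 ≤ ρ) (h : coshDist p q ≤ cosh ρ) :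
    angDist p.2 q.2 ≤ 2 * π * exp ((ρ - p.1 - q.1) / 2) := by
  set θ := angDist p.2 q.2
  have hcos : 2 / π ^ 2 * θ ^ 2 ≤ 1 - cos θ := by
    have hθπ : |θ| ≤ π := by rw [abs_of_nonneg hθ]; exact angDist_le_pi _ _
    linarith [cos_le_one_sub_mul_cos_sq hθπ]
  have key : exp p.1 / 4 * (exp q.1 / 4) * (2 / π ^ 2 * θ ^ 2) ≤ exp ρ / 2 :=
    calc exp p.1 / 4 * (exp q.1 / 4) * (2 / π ^ 2 * θ ^ 2)
        ≤ sinh p.1 * sinh q.1 * (1 - cos θ) := by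
          gcongr
          · exact exp_div_four_le_sinh hp
          · exact exp_div_four_le_sinh hq
      _ ≤ coshDist p q - 1 := by
          rw [cos_angDist]; exact sinh_mul_sinh_mul_one_sub_cos_le p q
      _ ≤ exp ρ / 2 := by linarith [cosh_sub_one_le_exp_div_two hρ]
  have hexp : exp ((ρ - p.1 - q.1) / 2) ^ 2 * (exp p.1 * exp q.1) = exp ρ := by
    rw [← exp_nat_mul, ← exp_add, ← exp_add]; congr 1; ring
  have hsq : θ ^ 2 ≤ (2 * π * exp ((ρ - p.1 - q.1) / 2)) ^ 2 := by
    rw [← hexp] at key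
    field_simp at key
    linear_combination key / 4
  exact (pow_le_pow_iff_left₀ hθ (by positivity) two_ne_zero).1 hsq

lemma C0_pos {α : ℝ} (hα : α < 1) : 0 < C0 α := by
  unfold C0
  apply div_pos two_pos
  nlinarith

lemma sub_le_Ri {α R c : ℝ} {i : ℕ} (hR : 0 ≤ R) (hi : i ≠ 0) (h : α ^ i * R ≤ 2 * c) :
    R - c ≤ Ri α R i := by
  rw [Ri, if_neg hi]
  have : 1 - α ^ i / 2 ≤ exp (-(α ^ i) / 2) := by linarith [add_one_le_exp (-(α ^ i) / 2)]
  nlinarith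

lemma pow_i0_le {α C : ℝ} {n : ℕ} (hα : α < 1)
    (h : 0 < 2 * C0 α * log (Rn C n) / Rn C n) :
    α ^ i0 α C n ≤ 2 * C0 α * log (Rn C n) / Rn C n :=
  Nat.sInf_mem (let ⟨j, hj⟩ := exists_pow_lt_of_lt_one h hα; ⟨j, hj.le⟩)

lemma sub_mul_log_le_Ri_i0 {α C : ℝ} {n : ℕ} (hα : α < 1) (hR : 1 < Rn C n)
    (h : 2 * C0 α * log (Rn C n) < Rn C n) :
    Rn C n - C0 α * log (Rn C n) ≤ Ri α (Rn C n) (i0 α C n) := by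
  set R := Rn C n
  have hR0 : 0 < R := by linarith
  have hpos : 0 < 2 * C0 α * log R / R := by
    have := C0_pos hα; have := log_pos hR; positivity
  have hpow := pow_i0_le hα hpos
  have hi0 : i0 α C n ≠ 0 := by
    intro h0
    rw [h0, pow_zero, le_div_iff₀ hR0, one_mul] at hpow
    linarith
  exact sub_le_Ri hR0.le hi0 (by rw [← mul_assoc]; exact (le_div_iff₀ hR0).1 hpow)

lemma exp_half_sub_le {R c a b : ℝ} (hR : 0 < R) (ha : R - c * log R ≤ a)
    (hb : R - c * log R ≤ b) : exp ((R - a - b) / 2) ≤ exp (-R / 2) * R ^ c := by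
  rw [rpow_def_of_pos hR, ← exp_add]
  exact exp_le_exp.2 (by linarith)

lemma tendsto_Rn (C : ℝ) : Tendsto (Rn C) atTop atTop :=
  tendsto_atTop_add_const_right _ C <|
    (tendsto_log_atTop.comp tendsto_natCast_atTop_atTop).const_mul_atTop two_pos

lemma eventually_mul_log_add_le (c d : ℝ) : ∀ᶠ x in atTop, c * log x + d ≤ x := by
  filter_upwards [((isLittleO_log_id_atTop.const_mul_left c).add
    (Asymptotics.isLittleO_const_id_atTop d)).bound one_pos, eventually_ge_atTop 0] with x hx hx0
  rw [one_mul, norm_eq_abs, norm_eq_abs, id, abs_of_nonneg hx0] at hx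
  exact (le_abs_self _).trans hx

theorem angle_bound_far_general (α C : ℝ) (hα' : α < 1) (ε : ℝ) (hε : 0 < ε) :
    ∃ n₀ : ℕ, ∀ n ≥ n₀, ∀ u v : ℝ × ℝ,
      validPoint (Rn C n) u → validPoint (Rn C n) v →
      Ri α (Rn C n) (i0 α C n) < u.1 → Ri α (Rn C n) (i0 α C n) < v.1 →
      coshDist u v ≤ Real.cosh (Rn C n) →
      angDist u.2 v.2 ≤ Real.exp (-(Rn C n) / 2) * Rn C n ^ (C0 α + ε) := by
  obtain ⟨n₀, hn₀⟩ := eventually_atTop.1 <| (tendsto_Rn C).eventually <|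
    (eventually_gt_atTop 1).and <| (eventually_mul_log_add_le (2 * C0 α) 1).and <|
      (tendsto_rpow_atTop hε).eventually_ge_atTop (2 * π)
  refine ⟨n₀, fun n hn u v hu hv hru hrv huv => ?_⟩
  obtain ⟨hR1, hlog, hRε⟩ := hn₀ n hn
  set R := Rn C n
  have hR0 : 0 < R := by linarith
  have hC0log : 0 ≤ C0 α * log R := mul_nonneg (C0_pos hα').le (log_nonneg hR1.le)
  have hRi := sub_mul_log_le_Ri_i0 hα' hR1 (by linarith)
  have hru' : R - C0 α * log R ≤ u.1 := hRi.trans hru.le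
  have hrv' : R - C0 α * log R ≤ v.1 := hRi.trans hrv.le
  have hθ : 0 ≤ angDist u.2 v.2 :=
    angDist_nonneg (abs_sub_lt_of_nonneg_of_lt hu.2.2.1 hu.2.2.2 hv.2.2.1 hv.2.2.2).le
  calc angDist u.2 v.2 ≤ 2 * π * exp ((R - u.1 - v.1) / 2) :=
        angDist_le_of_coshDist_le (by linarith) (by linarith) hθ hR0.le huv
    _ ≤ R ^ ε * (exp (-R / 2) * R ^ C0 α) := by
        gcongr
        exact exp_half_sub_le hR0 hru' hrv'
    _ = exp (-R / 2) * R ^ (C0 α + ε) := by rw [rpow_add hR0]; ring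

/-- Deterministic: two points of radius larger than `R_{i₀}` at hyperbolic
distance at most `R` subtend an angle at most `e^{-R/2} R^{C₀+ε}` at the origin. -/
theorem angle_bound_far (α C : ℝ) (hα : 1/2 < α) (hα' : α < 1) (ε : ℝ) (hε : 0 < ε) :
    ∃ n₀ : ℕ, ∀ n ≥ n₀, ∀ u v : ℝ × ℝ,
      validPoint (Rn C n) u → validPoint (Rn C n) v →
      Ri α (Rn C n) (i0 α C n) < u.1 → Ri α (Rn C n) (i0 α C n) < v.1 →
      coshDist u v ≤ Real.cosh (Rn C n) →
      angDist u.2 v.2 ≤ Real.exp (-(Rn C n) / 2) * Rn C n ^ (C0 α + ε) :=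
  angle_bound_far_general α C hα' ε hε
end

section
/- Let (m(n))_{n≥1} be a sequence of nonnegative integers with m(n) = o(√n). Then e^{−n} n^{n−m(n)} / (n−m(n))! = Θ(1/√n); that is, there exist constants c₁, c₂ > 0 and n₀ ∈ ℕ such that c₁/√n ≤ e^{−n} n^{n−m(n)} / (n−m(n))! ≤ c₂/√n for all n ≥ n₀. -/
/-!
Stirling's formula in the form `k! = s_k √(2k) (k/e)^k` with `√π ≤ s_k ≤ e/√2` for every `k ≥ 1`
gives `e^{-x} x^k / k! = e^{k log(x/k) - (x-k)} / (s_k √(2k))`. Applying `log t ≤ t - 1` to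
`x/k` and to `k/x` traps the exponent between `-(x-k)²/x` and `0`. For `x = n`, `k = n - m(n)`
the lower end is `-m(n)²/n`, which stays bounded because `m(n) = o(√n)`, while `√(2k) ≍ √n`.
-/

open Real MeasureTheory Filter

open scoped Nat

namespace Stirling

theorem stirlingSeq_le_exp_one_div_sqrt_two {k : ℕ} (hk : k ≠ 0) :
    stirlingSeq k ≤ exp 1 / √2 := by
  obtain ⟨j, rfl⟩ := Nat.exists_eq_succ_of_ne_zero hk
  simpa [stirlingSeq_one] using stirlingSeq'_antitone (Nat.zero_le j)

theorem exp_neg_mul_pow_div_factorial_eq {x : ℝ} (hx : 0 < x) {k : ℕ} (hk : k ≠ 0) :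
    exp (-x) * x ^ k / k ! = exp (k * log (x / k) - (x - k)) / (stirlingSeq k * √(2 * k)) := by
  have hk' : (0 : ℝ) < k := by positivity
  have hpow : exp (k * log (x / k)) = (x / k) ^ k := by
    rw [← Real.rpow_natCast, Real.rpow_def_of_pos (by positivity), mul_comm]
  rw [stirlingSeq, sub_eq_add_neg, exp_add, hpow, neg_sub, sub_eq_add_neg, exp_add,
    ← exp_one_pow, div_pow, div_pow]
  field_simp

end Stirling

theorem neg_sq_div_le_mul_log_div_sub {x y : ℝ} (hx : 0 < x) (hy : 0 < y) :
    -((x - y) ^ 2 / x) ≤ y * log (x / y) - (x - y) := by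
  have h := one_sub_inv_le_log_of_pos (div_pos hx hy)
  rw [inv_div] at h
  have := mul_le_mul_of_nonneg_left h hy.le
  have e : y * (1 - y / x) - (x - y) = -((x - y) ^ 2 / x) := by field_simp; ring
  linarith

theorem mul_log_div_sub_nonpos {x y : ℝ} (hx : 0 < x) (hy : 0 < y) :
    y * log (x / y) - (x - y) ≤ 0 := by
  have h := mul_le_mul_of_nonneg_left (log_le_sub_one_of_pos (div_pos hx hy)) hy.le
  have e : y * (x / y - 1) = x - y := by field_simp
  linarith

theorem exp_neg_mul_pow_div_factorial_le {x : ℝ} (hx : 0 < x) {k : ℕ} (hk : k ≠ 0)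
    (hxk : x ≤ 2 * k) : exp (-x) * x ^ k / k ! ≤ (√π)⁻¹ / √x := by
  have hs := Stirling.sqrt_pi_le_stirlingSeq hk
  rw [Stirling.exp_neg_mul_pow_div_factorial_eq hx hk]
  calc exp (k * log (x / k) - (x - k)) / (Stirling.stirlingSeq k * √(2 * k))
      ≤ 1 / (√π * √x) := by
        gcongr
        · exact exp_le_one_iff.2 (mul_log_div_sub_nonpos hx (by positivity))
        · exact (sqrt_nonneg π).trans hs
    _ = (√π)⁻¹ / √x := by ring

theorem exp_neg_mul_pow_div_factorial_ge {x : ℝ} (hx : 0 < x) {k : ℕ} (hk : k ≠ 0)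
    (hkx : k ≤ x) : exp (-1) * exp (-((x - k) ^ 2 / x)) / √x ≤ exp (-x) * x ^ k / k ! := by
  have hs := Stirling.stirlingSeq_le_exp_one_div_sqrt_two hk
  have hs₀ := (sqrt_pos.2 pi_pos).trans_le (Stirling.sqrt_pi_le_stirlingSeq hk)
  have hden : Stirling.stirlingSeq k * √(2 * k) ≤ exp 1 * √x :=
    calc Stirling.stirlingSeq k * √(2 * k) ≤ exp 1 / √2 * √(2 * x) := by gcongr
      _ = exp 1 * √x := by rw [sqrt_mul zero_le_two]; field_simp
  rw [Stirling.exp_neg_mul_pow_div_factorial_eq hx hk]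
  calc exp (-1) * exp (-((x - k) ^ 2 / x)) / √x = exp (-((x - k) ^ 2 / x)) / (exp 1 * √x) := by
        rw [exp_neg]; ring
    _ ≤ exp (k * log (x / k) - (x - k)) / (Stirling.stirlingSeq k * √(2 * k)) := by
        gcongr
        exact neg_sq_div_le_mul_log_div_sub hx (by positivity)

/-- If `m(n) = o(√n)`, then `P(Poisson(n) = n - m(n)) = Θ(1/√n)`. -/
theorem poisson_near_mode (m : ℕ → ℕ)
    (hm : Tendsto (fun n : ℕ => (m n : ℝ) / Real.sqrt n) atTop (nhds 0)) :
    ∃ c₁ > (0:ℝ), ∃ c₂ > (0:ℝ), ∃ n₀ : ℕ, ∀ n ≥ n₀,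
      c₁ / Real.sqrt n ≤
        Real.exp (-(n : ℝ)) * (n : ℝ) ^ (n - m n) / (Nat.factorial (n - m n) : ℝ) ∧
      Real.exp (-(n : ℝ)) * (n : ℝ) ^ (n - m n) / (Nat.factorial (n - m n) : ℝ) ≤
        c₂ / Real.sqrt n := by
  obtain ⟨N, hN⟩ := eventually_atTop.1 <|
    (hm.eventually (ge_mem_nhds one_half_pos)).and (eventually_ge_atTop 1)
  refine ⟨exp (-1) * exp (-(1 / 4)), by positivity, (√π)⁻¹, by positivity, N, fun n hn => ?_⟩
  obtain ⟨hmn, hn₁⟩ := hN n hn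
  have hx : (0 : ℝ) < n := by exact_mod_cast hn₁
  have hsq : (m n : ℝ) ^ 2 ≤ n / 4 := by
    have := (div_le_iff₀ (sqrt_pos.2 hx)).1 hmn
    nlinarith [sq_sqrt hx.le, sqrt_nonneg (n : ℝ)]
  have hhalf : 2 * (m n : ℝ) ≤ n := by
    nlinarith [(by exact_mod_cast hn₁ : (1 : ℝ) ≤ n)]
  have hle : m n ≤ n := by exact_mod_cast (by linarith : (m n : ℝ) ≤ n)
  have hk : ((n - m n : ℕ) : ℝ) = n - m n := Nat.cast_sub hle
  have hk₀ : n - m n ≠ 0 := by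
    have : (0 : ℝ) < ((n - m n : ℕ) : ℝ) := by rw [hk]; linarith
    exact_mod_cast this.ne'
  refine ⟨le_trans ?_ (exp_neg_mul_pow_div_factorial_ge hx hk₀ (by rw [hk]; linarith)),
    exp_neg_mul_pow_div_factorial_le hx hk₀ (by rw [hk]; linarith)⟩
  have hdev : (n - ((n - m n : ℕ) : ℝ)) ^ 2 / n ≤ 1 / 4 := by
    rw [hk, sub_sub_cancel, div_le_iff₀ hx]; linarith
  gcongr
end
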